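/- If M is a toroidal knot n-mosaic with total waste w(M), then the total waste of its embedding ι̂(M) as an (n+1)-mosaic satisfies w(M) + n + 1 ≤ w(ι̂(M)) ≤ w(M) + 2n + 1. Moreover the upper bound is achieved when M is a planar knot n-mosaic (no connection points on its planar boundary). -/
import Mathlib


/-- Toroidal suitable connectedness (edges: `0` = left, `1` = top, `2` = right,
`3` = bottom; indices mod `n`). -/
def ToroidallyConnected {n : ℕ} [NeZero n] (M : Fin n × Fin n → (Fin 4 → Bool)) : Prop :=
  ∀ i j : Fin n, M (i, j) 2 = M (i, j + 1) 0 ∧ M (i, j) 3 = M (i + 1, j) 1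

/-- The (normalized) waste of a tile: ¼ the number of edges without connection points. -/
def waste (t : Fin 4 → Bool) : ℚ :=
  (1 / 4) * ((Finset.univ.filter (fun e : Fin 4 => t e = false)).card : ℚ)

/-- Total waste of an `n`-mosaic: the sum of its tiles' wastes. -/
def totalWaste {n : ℕ} (M : Fin n × Fin n → (Fin 4 → Bool)) : ℚ :=
  ∑ p : Fin n × Fin n, waste (M p)

/-- The blank tile. -/
def blank : Fin 4 → Bool := ![false, false, false, false]

/-- The toroidal mosaic injection `ι̂` from `n`-mosaics to `(n+1)`-mosaics: the original
mosaic fills the top-left `n × n` block; a new tile in the last column is a cap arc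
(connections on its left and top edges, waste `1/2`) when the adjacent tile of `M` has a
right connection and blank (waste `1`) otherwise; symmetrically for the last row using
bottom connections; the corner tile is blank. -/
def iotaHat (n : ℕ) (hn : 0 < n) (M : Fin n × Fin n → (Fin 4 → Bool)) :
    Fin (n + 1) × Fin (n + 1) → (Fin 4 → Bool) :=
  fun p =>
    if h1 : (p.1 : ℕ) < n then
      if h2 : (p.2 : ℕ) < n then M (⟨p.1, h1⟩, ⟨p.2, h2⟩)
      else if M (⟨p.1, h1⟩, ⟨n - 1, Nat.sub_lt hn one_pos⟩) 2 = true then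
        ![true, true, false, false] else blank
    else
      if h2 : (p.2 : ℕ) < n then
        if M (⟨n - 1, Nat.sub_lt hn one_pos⟩, ⟨p.2, h2⟩) 3 = true then
          ![true, true, false, false] else blank
      else blank

lemma waste_blank : waste blank = 1 := by
  have h : (Finset.univ.filter (fun e : Fin 4 => blank e = false)).card = 4 := by decide
  rw [waste, h]; norm_num

lemma waste_arc : waste ![true, true, false, false] = 1/2 := by
  have h : (Finset.univ.filter (fun e : Fin 4 => ![true,true,false,false] e = false)).card = 2 := by decide
  rw [waste, h]; norm_num

/-- Waste bounds for the toroidal embedding: if `M` is a toroidal knot `n`-mosaic then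
`w(M) + n + 1 ≤ w(ι̂(M)) ≤ w(M) + 2n + 1`, and the upper bound is achieved when `M` is a
planar knot `n`-mosaic, i.e. has no connection points on its planar boundary. -/
theorem iotaHat_waste_bounds (n : ℕ) (hn : 0 < n) [NeZero n]
    (M : Fin n × Fin n → (Fin 4 → Bool)) (hM : ToroidallyConnected M) :
    totalWaste M + n + 1 ≤ totalWaste (iotaHat n hn M) ∧
    totalWaste (iotaHat n hn M) ≤ totalWaste M + 2 * n + 1 ∧
    ((∀ i : Fin n, M (i, ⟨0, hn⟩) 0 = false) →
     (∀ i : Fin n, M (i, ⟨n - 1, Nat.sub_lt hn one_pos⟩) 2 = false) →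
     (∀ j : Fin n, M (⟨0, hn⟩, j) 1 = false) →
     (∀ j : Fin n, M (⟨n - 1, Nat.sub_lt hn one_pos⟩, j) 3 = false) →
      totalWaste (iotaHat n hn M) = totalWaste M + 2 * n + 1) := by
  classical
  have hA : ∀ i j : Fin n, iotaHat n hn M (i.castSucc, j.castSucc) = M (i, j) := by
    intro i j
    simp [iotaHat, i.is_lt, j.is_lt]
  have hB : ∀ i : Fin n, iotaHat n hn M (i.castSucc, Fin.last n) =
      if M (i, ⟨n - 1, Nat.sub_lt hn one_pos⟩) 2 = true then
        ![true, true, false, false] else blank := by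
    intro i
    simp [iotaHat, i.is_lt]
  have hC : ∀ j : Fin n, iotaHat n hn M (Fin.last n, j.castSucc) =
      if M (⟨n - 1, Nat.sub_lt hn one_pos⟩, j) 3 = true then
        ![true, true, false, false] else blank := by
    intro j
    simp [iotaHat, j.is_lt]
  have hD : iotaHat n hn M (Fin.last n, Fin.last n) = blank := by
    simp [iotaHat]
  have key : totalWaste (iotaHat n hn M)
      = totalWaste M
        + (∑ i : Fin n, waste (iotaHat n hn M (i.castSucc, Fin.last n)))
        + (∑ j : Fin n, waste (iotaHat n hn M (Fin.last n, j.castSucc)))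
        + 1 := by
    rw [totalWaste, Fintype.sum_prod_type, Fin.sum_univ_castSucc]
    simp only [Fin.sum_univ_castSucc (n := n)]
    rw [totalWaste, Fintype.sum_prod_type]
    simp only [hA, hD, waste_blank, Finset.sum_add_distrib]
    ring
  have hcb : ∀ i : Fin n,
      1/2 ≤ waste (iotaHat n hn M (i.castSucc, Fin.last n)) ∧
      waste (iotaHat n hn M (i.castSucc, Fin.last n)) ≤ 1 := by
    intro i
    rw [hB]
    split <;> simp [waste_arc, waste_blank] <;> norm_num
  have hdb : ∀ j : Fin n,
      1/2 ≤ waste (iotaHat n hn M (Fin.last n, j.castSucc)) ∧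
      waste (iotaHat n hn M (Fin.last n, j.castSucc)) ≤ 1 := by
    intro j
    rw [hC]
    split <;> simp [waste_arc, waste_blank] <;> norm_num
  have hsum_half : ∀ f : Fin n → ℚ, (∀ i, 1/2 ≤ f i) → (n : ℚ)/2 ≤ ∑ i, f i := by
    intro f hf
    calc (n : ℚ)/2 = ∑ _i : Fin n, (1/2 : ℚ) := by
          simp [Finset.sum_const, Finset.card_univ]; ring
      _ ≤ ∑ i, f i := Finset.sum_le_sum (fun i _ => hf i)
  have hsum_one : ∀ f : Fin n → ℚ, (∀ i, f i ≤ 1) → ∑ i, f i ≤ (n : ℚ) := by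
    intro f hf
    calc ∑ i, f i ≤ ∑ _i : Fin n, (1 : ℚ) := Finset.sum_le_sum (fun i _ => hf i)
      _ = (n : ℚ) := by simp
  refine ⟨?_, ?_, ?_⟩
  · rw [key]
    have h1 := hsum_half _ (fun i => (hcb i).1)
    have h2 := hsum_half _ (fun j => (hdb j).1)
    linarith
  · rw [key]
    have h1 := hsum_one _ (fun i => (hcb i).2)
    have h2 := hsum_one _ (fun j => (hdb j).2)
    linarith
  · intro _ h2 _ h4
    rw [key]
    have e1 : ∀ i : Fin n, waste (iotaHat n hn M (i.castSucc, Fin.last n)) = 1 := by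
      intro i; rw [hB, if_neg (by simp [h2 i]), waste_blank]
    have e2 : ∀ j : Fin n, waste (iotaHat n hn M (Fin.last n, j.castSucc)) = 1 := by
      intro j; rw [hC, if_neg (by simp [h4 j]), waste_blank]
    simp only [e1, e2, Finset.sum_const, Finset.card_univ, Fintype.card_fin, nsmul_eq_mul, mul_one]
    ring
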